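/- Let m be a positive integer and let ε > 0. Then there are infinitely many positive integers n such that every prime divisor p of n^m − 1 satisfies (p : ℝ) < (n : ℝ)^ε. -/
import Mathlib

open Polynomial Finset

private lemma totient_prod_primes : ∀ F : Finset ℕ, (∀ p ∈ F, p.Prime) →
    Nat.totient (∏ p ∈ F, p) = ∏ p ∈ F, (p - 1) := by
  intro F
  induction F using Finset.induction with
  | empty => simp
  | @insert p F hpF ih =>
    intro h
    have hp : p.Prime := h p (Finset.mem_insert_self _ _)
    have hcop : Nat.Coprime p (∏ q ∈ F, q) := by
      apply Nat.Coprime.prod_right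
      intro q hq
      exact (Nat.coprime_primes hp (h q (Finset.mem_insert_of_mem hq))).mpr
        (fun he => hpF (he ▸ hq))
    rw [Finset.prod_insert hpF, Finset.prod_insert hpF, Nat.totient_mul hcop,
      Nat.totient_prime hp, ih (fun q hq => h q (Finset.mem_insert_of_mem hq))]

private lemma small_totient (δ : ℝ) (hδ : 0 < δ) :
    ∃ s : ℕ, 0 < s ∧ (Nat.totient s : ℝ) < δ * s := by
  classical
  set f : ℕ → ℝ := Set.indicator {p | p.Prime} (fun n : ℕ => (1 : ℝ) / n) with hf
  have hf0 : ∀ n, 0 ≤ f n := fun n =>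
    Set.indicator_nonneg (fun i _ => by positivity) n
  have hdiv : Filter.Tendsto (fun n => ∑ i ∈ Finset.range n, f i)
      Filter.atTop Filter.atTop :=
    (not_summable_iff_tendsto_nat_atTop_of_nonneg hf0).mp not_summable_one_div_on_primes
  obtain ⟨N, hN⟩ := (Filter.tendsto_atTop.mp hdiv (-Real.log δ + 1)).exists
  set F : Finset ℕ := (Finset.range N).filter Nat.Prime with hF
  have hFp : ∀ p ∈ F, p.Prime := fun p hp => (Finset.mem_filter.mp hp).2
  have hsum : ∑ i ∈ Finset.range N, f i = ∑ p ∈ F, (1 : ℝ) / p := by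
    rw [hF, Finset.sum_filter]
    exact Finset.sum_congr rfl (fun i _ => by simp [hf, Set.indicator_apply])
  set s : ℕ := ∏ p ∈ F, p with hs
  have hspos : 0 < s := Finset.prod_pos (fun p hp => (hFp p hp).pos)
  refine ⟨s, hspos, ?_⟩
  have htot : (Nat.totient s : ℝ) = ∏ p ∈ F, ((p : ℝ) - 1) := by
    rw [hs, totient_prod_primes F hFp, Nat.cast_prod]
    exact Finset.prod_congr rfl fun p hp => by
      rw [Nat.cast_sub (hFp p hp).one_lt.le, Nat.cast_one]
  have hsR : (s : ℝ) = ∏ p ∈ F, (p : ℝ) := by rw [hs, Nat.cast_prod]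
  have key : ∏ p ∈ F, ((p : ℝ) - 1) ≤
      ∏ p ∈ F, ((p : ℝ) * Real.exp (-(1 / p))) := by
    apply Finset.prod_le_prod
    · intro p hp
      have : (2 : ℝ) ≤ p := by exact_mod_cast (hFp p hp).two_le
      linarith
    · intro p hp
      have hp0 : (0 : ℝ) < p := by exact_mod_cast (hFp p hp).pos
      have h1 : (p : ℝ) * (1 / p) = 1 := by field_simp
      have := Real.add_one_le_exp (-(1 / (p : ℝ)))
      nlinarith [this, hp0, h1]
  have keq : ∏ p ∈ F, ((p : ℝ) * Real.exp (-(1 / p))) =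
      (s : ℝ) * Real.exp (-(∑ p ∈ F, (1 : ℝ) / p)) := by
    rw [Finset.prod_mul_distrib, ← Real.exp_sum, ← Finset.sum_neg_distrib, hsR]
  have hS : -Real.log δ < ∑ p ∈ F, (1 : ℝ) / p := by
    rw [← hsum]; linarith
  have hexp : Real.exp (-(∑ p ∈ F, (1 : ℝ) / p)) < δ := by
    rw [← Real.exp_log hδ]
    exact Real.exp_lt_exp.mpr (by linarith)
  have hsR0 : (0 : ℝ) < s := by exact_mod_cast hspos
  calc (Nat.totient s : ℝ) = ∏ p ∈ F, ((p : ℝ) - 1) := htot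
    _ ≤ ∏ p ∈ F, ((p : ℝ) * Real.exp (-(1 / p))) := key
    _ = (s : ℝ) * Real.exp (-(∑ p ∈ F, (1 : ℝ) / p)) := keq
    _ < (s : ℝ) * δ := mul_lt_mul_of_pos_left hexp hsR0
    _ = δ * s := mul_comm _ _

private lemma totient_mul_le_sq (s m : ℕ) (hs : 0 < s) (hm : 0 < m) :
    Nat.totient (s * m) ≤ Nat.totient s * m ^ 2 := by
  have h := Nat.totient_gcd_mul_totient_mul s m
  have hg : 0 < Nat.totient (Nat.gcd s m) :=
    Nat.totient_pos.mpr (Nat.gcd_pos_of_pos_left m hs)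
  have h1 : Nat.totient (s * m) ≤ Nat.totient s * Nat.totient m * Nat.gcd s m := by
    calc Nat.totient (s * m) ≤ Nat.totient (Nat.gcd s m) * Nat.totient (s * m) :=
          Nat.le_mul_of_pos_left _ hg
      _ = Nat.totient s * Nat.totient m * Nat.gcd s m := h
  calc Nat.totient (s * m) ≤ Nat.totient s * Nat.totient m * Nat.gcd s m := h1
    _ ≤ Nat.totient s * m * m :=
        Nat.mul_le_mul (Nat.mul_le_mul_left _ (Nat.totient_le m)) (Nat.gcd_le_right _ hm)
    _ = Nat.totient s * m ^ 2 := by ring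

theorem stmt_15 (m : ℕ) (hm : 0 < m) (ε : ℝ) (hε : 0 < ε) :
    ∀ N : ℕ, ∃ n : ℕ, N < n ∧
      ∀ p : ℕ, p.Prime → (p : ℤ) ∣ ((n : ℤ) ^ m - 1) →
        (p : ℝ) < (n : ℝ) ^ ε := by
  intro N₀
  obtain ⟨s, hs, hδ⟩ := small_totient (ε / (2 * m ^ 2)) (by positivity)
  set b : ℕ := N₀ + 2 with hb
  refine ⟨b ^ s, ?_, ?_⟩
  · have h1 : b ≤ b ^ s := Nat.le_self_pow hs.ne' b
    omega
  intro p hp hdvd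
  have hb2 : 2 ≤ b := by omega
  have hbR : (1 : ℝ) < (b : ℝ) := by exact_mod_cast (by omega : 1 < b)
  have hsm : 0 < s * m := Nat.mul_pos hs hm
  -- express n^m - 1 as product of cyclotomic values
  have hprod : ((b : ℤ)) ^ (s * m) - 1 =
      ∏ d ∈ (s * m).divisors, (Polynomial.cyclotomic d ℤ).eval (b : ℤ) := by
    have := congrArg (Polynomial.eval (b : ℤ))
      (Polynomial.prod_cyclotomic_eq_X_pow_sub_one hsm ℤ)
    simpa [Polynomial.eval_prod] using this.symm
  have hdvd' : (p : ℤ) ∣ ∏ d ∈ (s * m).divisors, (Polynomial.cyclotomic d ℤ).eval (b : ℤ) := by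
    rw [← hprod]
    have : ((b ^ s : ℕ) : ℤ) ^ m - 1 = (b : ℤ) ^ (s * m) - 1 := by
      push_cast
      rw [← pow_mul]
    rwa [this] at hdvd
  obtain ⟨d, hd, hpd⟩ := (Prime.dvd_finset_prod_iff ((Int.prime_iff_natAbs_prime.mpr (by simpa using hp))) _).mp hdvd'
  have hdd : d ∣ s * m := (Nat.mem_divisors.mp hd).1
  have hdpos : 0 < d := Nat.pos_of_mem_divisors hd
  set E : ℤ := (Polynomial.cyclotomic d ℤ).eval (b : ℤ) with hE
  have hcast : ((E : ℤ) : ℝ) = (Polynomial.cyclotomic d ℝ).eval (b : ℝ) := by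
    have := Polynomial.cyclotomic.eval_apply (b : ℤ) d (algebraMap ℤ ℝ)
    simpa using this.symm
  have hlow : (1 : ℝ) ≤ ((E : ℤ) : ℝ) := by
    rw [hcast]
    have hbR2 : (2 : ℝ) ≤ (b : ℝ) := by exact_mod_cast hb2
    calc (1 : ℝ) ≤ ((b : ℝ) - 1) ^ Nat.totient d :=
          one_le_pow₀ (by linarith)
      _ ≤ _ := Polynomial.sub_one_pow_totient_le_cyclotomic_eval hbR d
  have hEpos : 0 < E := by exact_mod_cast (by linarith : (0:ℝ) < ((E:ℤ):ℝ))
  have hple : (p : ℝ) ≤ ((E : ℤ) : ℝ) := by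
    exact_mod_cast Int.le_of_dvd hEpos hpd
  have hup : ((E : ℤ) : ℝ) ≤ ((b : ℝ) + 1) ^ Nat.totient d := by
    rw [hcast]
    exact Polynomial.cyclotomic_eval_le_add_one_pow_totient hbR d
  have hstrict : ((b : ℝ) + 1) ^ Nat.totient d < ((b : ℝ) ^ 2) ^ Nat.totient d := by
    have hbR2 : (2 : ℝ) ≤ (b : ℝ) := by exact_mod_cast hb2
    apply pow_lt_pow_left₀ _ (by positivity) (Nat.totient_pos.mpr hdpos).ne'
    nlinarith
  have htd : Nat.totient d ≤ Nat.totient (s * m) :=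
    Nat.le_of_dvd (Nat.totient_pos.mpr hsm) (Nat.totient_dvd_of_dvd hdd)
  have hmono : ((b : ℝ) ^ 2) ^ Nat.totient d ≤ (b : ℝ) ^ (2 * Nat.totient (s * m)) := by
    rw [← pow_mul]
    apply pow_le_pow_right₀ hbR.le
    omega
  -- exponent inequality
  have hexp : (2 * Nat.totient (s * m) : ℝ) ≤ (s : ℝ) * ε := by
    have h1 : (Nat.totient (s * m) : ℝ) ≤ (Nat.totient s : ℝ) * (m : ℝ) ^ 2 := by
      exact_mod_cast totient_mul_le_sq s m hs hm
    have hm2 : (0 : ℝ) < (m : ℝ) ^ 2 := by positivity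
    have h2 : (Nat.totient s : ℝ) * (m : ℝ) ^ 2 < ε / (2 * (m : ℝ) ^ 2) * s * (m : ℝ) ^ 2 := by
      have := hδ
      push_cast at this ⊢
      nlinarith
    have h3 : ε / (2 * (m : ℝ) ^ 2) * s * (m : ℝ) ^ 2 = (s : ℝ) * ε / 2 := by
      field_simp
    linarith
  -- conclude with rpow
  have hfinal : (b : ℝ) ^ (2 * Nat.totient (s * m)) ≤ ((b ^ s : ℕ) : ℝ) ^ ε := by
    have hb0 : (0 : ℝ) ≤ b := by positivity
    have e1 : ((b ^ s : ℕ) : ℝ) ^ ε = (b : ℝ) ^ ((s : ℝ) * ε) := by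
      rw [Nat.cast_pow, ← Real.rpow_natCast (b : ℝ) s, ← Real.rpow_mul hb0]
    have e2 : (b : ℝ) ^ (2 * Nat.totient (s * m)) =
        (b : ℝ) ^ ((2 * Nat.totient (s * m) : ℕ) : ℝ) := by
      rw [Real.rpow_natCast]
    rw [e1, e2]
    apply Real.rpow_le_rpow_of_exponent_le hbR.le
    exact_mod_cast hexp
  calc (p : ℝ) ≤ ((E : ℤ) : ℝ) := hple
    _ ≤ ((b : ℝ) + 1) ^ Nat.totient d := hup
    _ < ((b : ℝ) ^ 2) ^ Nat.totient d := hstrict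
    _ ≤ (b : ℝ) ^ (2 * Nat.totient (s * m)) := hmono
    _ ≤ ((b ^ s : ℕ) : ℝ) ^ ε := hfinal
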